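/- Let n ≥ 1, 0 ≤ ε < 1, and let N be the n-qubit depolarizing channel N(ρ) = (1−ε)·ρ + ε·tr[ρ]·I/2^n on 2^n×2^n complex matrices. Then for every n-qubit Pauli operator O that is not the identity, the retrieving cost satisfies γ_O(N) = 1/(1−ε). -/

import Mathlib

open Matrix
open scoped Kronecker ComplexOrder

abbrev MatC (n : Type*) := Matrix n n ℂ

/-- A linear map on matrices is Hermitian-preserving if it sends Hermitian
matrices to Hermitian matrices. -/
def IsHermitianPreserving {n : Type*} [Fintype n] [DecidableEq n]
    (M : MatC n →ₗ[ℂ] MatC n) : Prop :=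
  ∀ X : MatC n, X.IsHermitian → (M X).IsHermitian

/-- A linear map on matrices is trace-scaling if it scales the trace by a fixed
real factor. -/
def IsTraceScaling {n : Type*} [Fintype n] [DecidableEq n]
    (M : MatC n →ₗ[ℂ] MatC n) : Prop :=
  ∃ p : ℝ, ∀ X : MatC n, (M X).trace = (p : ℂ) * X.trace

/-- The Choi matrix `J_M = Σ_{i,j} |i⟩⟨j| ⊗ M(|i⟩⟨j|)` of a linear map on matrices. -/
def choi {n : Type*} [Fintype n] [DecidableEq n]
    (M : MatC n →ₗ[ℂ] MatC n) : Matrix (n × n) (n × n) ℂ :=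
  Matrix.of fun p q => M (Matrix.single p.1 q.1 1) p.2 q.2

/-- A quantum channel is a completely positive (positive semidefinite Choi matrix)
trace-preserving linear map. -/
def IsQuantumChannel {n : Type*} [Fintype n] [DecidableEq n]
    (M : MatC n →ₗ[ℂ] MatC n) : Prop :=
  (choi M).PosSemidef ∧ ∀ X : MatC n, (M X).trace = X.trace

/-- `Md` is the adjoint of `M` with respect to the Hilbert-Schmidt inner product
`⟨A, B⟩ = tr[A† B]`. -/
def IsAdjointPair {n : Type*} [Fintype n] [DecidableEq n]
    (M Md : MatC n →ₗ[ℂ] MatC n) : Prop :=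
  ∀ A B : MatC n, (Aᴴ * M B).trace = ((Md A)ᴴ * B).trace

/-- A density matrix: positive semidefinite with unit trace. -/
def IsDensityMatrix {n : Type*} [Fintype n] [DecidableEq n] (ρ : MatC n) : Prop :=
  ρ.PosSemidef ∧ ρ.trace = 1

/-- The Hermitian matrices as a real submodule of the complex matrices. -/
noncomputable def hermSubmodule (n : Type*) [Fintype n] [DecidableEq n] :
    Submodule ℝ (MatC n) :=
  selfAdjoint.submodule ℝ (MatC n)

/-- The image of the Hermitian matrices under a (complex-)linear map, as a real
submodule. -/
noncomputable def hermitianImage {n : Type*} [Fintype n] [DecidableEq n]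
    (M : MatC n →ₗ[ℂ] MatC n) : Submodule ℝ (MatC n) :=
  (hermSubmodule n).map (M.restrictScalars ℝ)

/-- The linear map `ρ ↦ Σ_i E_i ρ E_i†` given by a finite family of Kraus operators. -/
noncomputable def krausMap {n : Type*} [Fintype n] {k : ℕ} (E : Fin k → Matrix n n ℂ) :
    MatC n →ₗ[ℂ] MatC n where
  toFun ρ := ∑ i, E i * ρ * (E i)ᴴ
  map_add' ρ σ := by
    simp [Matrix.mul_add, Matrix.add_mul, Finset.sum_add_distrib]
  map_smul' c ρ := by
    simp [Matrix.mul_smul, Matrix.smul_mul, Finset.smul_sum]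

/-- The Pauli X matrix. -/
def PauliX : MatC (Fin 2) := !![0, 1; 1, 0]

/-- The Pauli Y matrix. -/
def PauliY : MatC (Fin 2) := !![0, -Complex.I; Complex.I, 0]

/-- The Pauli Z matrix. -/
def PauliZ : MatC (Fin 2) := !![1, 0; 0, -1]

/-- The Kraus operators of the single-qubit generalized amplitude damping channel
with damping factor `ε` and temperature indicator `p`. -/
noncomputable def gadKraus (p ε : ℝ) : Fin 4 → MatC (Fin 2) :=
  ![(Real.sqrt p : ℂ) • !![1, 0; 0, (Real.sqrt (1 - ε) : ℂ)],
    ((Real.sqrt p * Real.sqrt ε : ℝ) : ℂ) • !![0, 1; 0, 0],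
    (Real.sqrt (1 - p) : ℂ) • !![(Real.sqrt (1 - ε) : ℂ), 0; 0, 1],
    ((Real.sqrt (1 - p) * Real.sqrt ε : ℝ) : ℂ) • !![0, 0; 1, 0]]

/-- The single-qubit generalized amplitude damping channel. -/
noncomputable def gad (p ε : ℝ) : MatC (Fin 2) →ₗ[ℂ] MatC (Fin 2) :=
  krausMap (gadKraus p ε)

/-- The set of costs `|c₁| + |c₂|` over all two-channel retrievers for the shadow
information `tr[ρ O]` through the noisy channel `N`: real numbers `c₁, c₂` and
quantum channels `D₁, D₂` such that `D = c₁·D₁ + c₂·D₂` satisfies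
`tr[D(N(ρ))·O] = tr[ρ·O]` for every density matrix `ρ`. -/
def retrCosts {n : Type*} [Fintype n] [DecidableEq n]
    (N : MatC n →ₗ[ℂ] MatC n) (O : MatC n) : Set ℝ :=
  {s | ∃ (c₁ c₂ : ℝ) (D₁ D₂ : MatC n →ₗ[ℂ] MatC n),
    IsQuantumChannel D₁ ∧ IsQuantumChannel D₂ ∧
    (∀ ρ : MatC n, IsDensityMatrix ρ →
      ((((c₁ : ℂ) • D₁ + (c₂ : ℂ) • D₂) (N ρ)) * O).trace = (ρ * O).trace) ∧
    s = |c₁| + |c₂|}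

/-- The single-qubit Pauli matrices `I, X, Y, Z` indexed by `Fin 4`. -/
noncomputable def pauli1 : Fin 4 → MatC (Fin 2) := ![1, PauliX, PauliY, PauliZ]

/-- The `n`-qubit Pauli operator determined by a word `s : Fin n → Fin 4`, i.e. the
tensor product `σ_{s 0} ⊗ ⋯ ⊗ σ_{s (n-1)}`, as a matrix on the `n`-fold tensor
product space indexed by `Fin n → Fin 2`. -/
noncomputable def pauliN (n : ℕ) (s : Fin n → Fin 4) : MatC (Fin n → Fin 2) :=
  Matrix.of fun x y => ∏ i, pauli1 (s i) (x i) (y i)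

/-- The `n`-qubit mixed Pauli channel `ρ ↦ Σ_σ p_σ · σρσ`. -/
noncomputable def mixedPauli (n : ℕ) (prob : (Fin n → Fin 4) → ℝ) :
    MatC (Fin n → Fin 2) →ₗ[ℂ] MatC (Fin n → Fin 2) where
  toFun ρ := ∑ s, (prob s : ℂ) • (pauliN n s * ρ * pauliN n s)
  map_add' ρ σ := by
    simp [Matrix.mul_add, Matrix.add_mul, Finset.sum_add_distrib, smul_add]
  map_smul' c ρ := by
    simp only [Matrix.mul_smul, Matrix.smul_mul, RingHom.id_apply, Finset.smul_sum]
    exact Finset.sum_congr rfl fun s _ => smul_comm _ _ _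

open Classical in
/-- The total probability `P⁺` of the Pauli operators that commute with `O`. -/
noncomputable def commWeight (n : ℕ) (prob : (Fin n → Fin 4) → ℝ)
    (O : MatC (Fin n → Fin 2)) : ℝ :=
  ∑ s, if pauliN n s * O = O * pauliN n s then prob s else 0

open Classical in
/-- The total probability `P⁻` of the Pauli operators that anticommute with `O`. -/
noncomputable def anticommWeight (n : ℕ) (prob : (Fin n → Fin 4) → ℝ)
    (O : MatC (Fin n → Fin 2)) : ℝ :=
  ∑ s, if pauliN n s * O = -(O * pauliN n s) then prob s else 0

/-- The `n`-qubit depolarizing channel `ρ ↦ (1−ε)·ρ + ε·tr[ρ]·I/2ⁿ`. -/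
noncomputable def depol (n : ℕ) (ε : ℝ) :
    MatC (Fin n → Fin 2) →ₗ[ℂ] MatC (Fin n → Fin 2) where
  toFun ρ := ((1 - ε : ℝ) : ℂ) • ρ + ((ε : ℂ) * ρ.trace / (2 ^ n : ℂ)) • 1
  map_add' ρ σ := by
    simp only [Matrix.trace_add]
    module
  map_smul' c ρ := by
    simp only [Matrix.trace_smul, smul_eq_mul, RingHom.id_apply]
    module

/-! The eigenstates `ρ± = (1 ± O) / 2ⁿ` of the Pauli observable `O` satisfy `tr[ρ± O] = ±1`,
and the depolarizing channel shrinks their difference by exactly the factor `1 - ε`. For a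
retriever `D = c₁ D₁ + c₂ D₂` this gives `2 = tr[D(N ρ₊ - N ρ₋) O] ≤ (1 - ε) · 2 (|c₁| + |c₂|)`,
since `|tr[σ O]| ≤ 1` for every state `σ` (because `1 ± O ≥ 0`). Conversely `tr O = 0` gives
`tr[N(ρ) O] = (1 - ε) tr[ρ O]`, so the rescaled identity `c₁ = 1 / (1 - ε)`, `c₂ = 0` attains the
bound. -/

namespace Matrix

variable {ι m R : Type*} [Fintype ι] [CommSemiring R]

lemma of_prod_mul_of_prod [DecidableEq ι] [Fintype m] (A B : ι → Matrix m m R) :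
    (of fun x y : ι → m => ∏ i, A i (x i) (y i)) * (of fun x y => ∏ i, B i (x i) (y i)) =
      of fun x y => ∏ i, (A i * B i) (x i) (y i) := by
  ext x y
  simp only [mul_apply, of_apply, ← Finset.prod_mul_distrib]
  exact (Fintype.prod_sum fun i a => A i (x i) a * B i a (y i)).symm

lemma of_prod_one [DecidableEq m] :
    (of fun x y : ι → m => ∏ i, (1 : Matrix m m R) (x i) (y i)) = 1 := by
  ext x y
  simp [one_apply, Finset.prod_boole, funext_iff]

lemma trace_of_prod [DecidableEq ι] [Fintype m] (A : ι → Matrix m m R) :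
    trace (of fun x y : ι → m => ∏ i, A i (x i) (y i)) = ∏ i, trace (A i) := by
  simp only [trace, diag, of_apply]
  exact (Fintype.prod_sum fun i a => A i a a).symm

lemma conjTranspose_of_prod [StarRing R] (A : ι → Matrix m m R) :
    (of fun x y : ι → m => ∏ i, A i (x i) (y i))ᴴ =
      of fun x y => ∏ i, (A i)ᴴ (x i) (y i) := by
  ext x y
  simp [star_prod]

end Matrix

lemma pauli1_mul_self (k : Fin 4) : pauli1 k * pauli1 k = 1 := by
  fin_cases k <;>
    · ext i j
      fin_cases i <;> fin_cases j <;>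
        simp [pauli1, PauliX, PauliY, PauliZ, mul_apply, Fin.sum_univ_two, one_apply]

lemma pauli1_isHermitian (k : Fin 4) : (pauli1 k).IsHermitian := by
  fin_cases k <;>
    · ext i j
      fin_cases i <;> fin_cases j <;> simp [pauli1, PauliX, PauliY, PauliZ, one_apply]

lemma trace_pauli1 {k : Fin 4} (hk : k ≠ 0) : (pauli1 k).trace = 0 := by
  fin_cases k
  · exact absurd rfl hk
  all_goals simp [pauli1, PauliX, PauliY, PauliZ, trace, Fin.sum_univ_two]

lemma pauliN_mul_self {n : ℕ} (t : Fin n → Fin 4) : pauliN n t * pauliN n t = 1 := by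
  simp only [pauliN, of_prod_mul_of_prod, pauli1_mul_self, of_prod_one]

lemma pauliN_isHermitian {n : ℕ} (t : Fin n → Fin 4) : (pauliN n t).IsHermitian := by
  simp only [IsHermitian, pauliN, conjTranspose_of_prod, (pauli1_isHermitian _).eq]

lemma trace_pauliN_eq_zero {n : ℕ} {t : Fin n → Fin 4} (ht : pauliN n t ≠ 1) :
    (pauliN n t).trace = 0 := by
  obtain ⟨i, hi⟩ : ∃ i, t i ≠ 0 := by
    contrapose! ht
    simp only [pauliN, ht]
    exact of_prod_one
  rw [pauliN, trace_of_prod]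
  exact Finset.prod_eq_zero (Finset.mem_univ i) (trace_pauli1 hi)

section Channels

variable {d : Type*} [Fintype d] [DecidableEq d]

open scoped MatrixOrder in
lemma Matrix.PosSemidef.trace_mul_nonneg {A B : MatC d} (hA : A.PosSemidef) (hB : B.PosSemidef) :
    0 ≤ (A * B).trace := by
  obtain ⟨S, rfl⟩ := CStarAlgebra.nonneg_iff_eq_star_mul_self.mp hA.nonneg
  rw [mul_assoc, trace_mul_comm, star_eq_conjTranspose]
  exact (hB.mul_mul_conjTranspose_same S).trace_nonneg

lemma posSemidef_one_add {O : MatC d} (hO : O.IsHermitian) (hO2 : O * O = 1) :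
    (1 + O).PosSemidef := by
  have hsq : 1 + O = (1 / 2 : ℂ) • ((1 + O)ᴴ * (1 + O)) := by
    simp only [conjTranspose_add, conjTranspose_one, hO.eq, add_mul, mul_add, hO2, one_mul,
      mul_one]
    module
  rw [hsq]
  exact (posSemidef_conjTranspose_mul_self _).smul (by positivity)

lemma IsDensityMatrix.norm_trace_mul_le_one {σ O : MatC d} (hσ : IsDensityMatrix σ)
    (hO : O.IsHermitian) (hO2 : O * O = 1) : ‖(σ * O).trace‖ ≤ 1 := by
  have hplus := hσ.1.trace_mul_nonneg (posSemidef_one_add hO hO2)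
  have hminus := hσ.1.trace_mul_nonneg (posSemidef_one_add hO.neg (by rw [neg_mul_neg, hO2]))
  rw [mul_add, trace_add, mul_one, hσ.2] at hplus
  rw [mul_add, trace_add, mul_one, hσ.2, mul_neg, trace_neg] at hminus
  obtain ⟨hre₁, him⟩ := Complex.le_def.mp hplus
  obtain ⟨hre₂, -⟩ := Complex.le_def.mp hminus
  simp only [Complex.zero_re, Complex.zero_im, Complex.add_re, Complex.add_im, Complex.one_re,
    Complex.one_im, Complex.neg_re] at hre₁ him hre₂
  rw [← Complex.abs_re_eq_norm.mpr (by linarith), abs_le]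
  constructor <;> linarith

lemma apply_apply_eq_sum_choi (M : MatC d →ₗ[ℂ] MatC d) (X : MatC d) (a b : d) :
    M X a b = ∑ i, ∑ j, X i j * choi M (i, a) (j, b) := by
  conv_lhs => rw [matrix_eq_sum_single X]
  simp only [map_sum, Matrix.sum_apply]
  refine Finset.sum_congr rfl fun i _ => Finset.sum_congr rfl fun j _ => ?_
  rw [show single i j (X i j) = X i j • single i j 1 by rw [smul_single, smul_eq_mul, mul_one],
    map_smul, Matrix.smul_apply, smul_eq_mul]
  rfl

open scoped MatrixOrder in
lemma posSemidef_apply_of_posSemidef_choi {M : MatC d →ₗ[ℂ] MatC d}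
    (hM : (choi M).PosSemidef) {X : MatC d} (hX : X.PosSemidef) : (M X).PosSemidef := by
  obtain ⟨B, rfl⟩ := CStarAlgebra.nonneg_iff_eq_star_mul_self.mp hX.nonneg
  -- `(V k * choi M * (V k)ᴴ) a b = ∑ i j, conj (B k i) * B k j * choi M (i, a) (j, b)`
  let V : d → Matrix d (d × d) ℂ := fun k => of fun a p => if p.2 = a then star (B k p.1) else 0
  have hMX : M (star B * B) = ∑ k, V k * choi M * (V k)ᴴ := by
    ext a b
    simp only [apply_apply_eq_sum_choi, Matrix.sum_apply, mul_apply, conjTranspose_apply, V,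
      of_apply, Fintype.sum_prod_type, star_eq_conjTranspose]
    simp only [ite_mul, zero_mul, Finset.sum_ite_eq', Finset.mem_univ, if_true, apply_ite star,
      star_star, star_zero, mul_ite, mul_zero, Finset.sum_mul]
    rw [Finset.sum_comm_cycle]
    refine Finset.sum_congr rfl fun k _ => Finset.sum_comm.trans ?_
    refine Finset.sum_congr rfl fun j _ => Finset.sum_congr rfl fun i _ => ?_
    ring
  rw [hMX]
  exact posSemidef_sum _ fun k _ => hM.mul_mul_conjTranspose_same (V k)

lemma IsQuantumChannel.isDensityMatrix_apply {D : MatC d →ₗ[ℂ] MatC d} (hD : IsQuantumChannel D)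
    {ρ : MatC d} (hρ : IsDensityMatrix ρ) : IsDensityMatrix (D ρ) :=
  ⟨posSemidef_apply_of_posSemidef_choi hD.1 hρ.1, (hD.2 ρ).trans hρ.2⟩

lemma isQuantumChannel_id : IsQuantumChannel (LinearMap.id : MatC d →ₗ[ℂ] MatC d) := by
  refine ⟨?_, fun _ => rfl⟩
  let v : d × d → ℂ := fun p => if p.1 = p.2 then 1 else 0
  have hchoi : choi LinearMap.id = vecMulVec v (star v) := by
    ext p q
    simp only [choi, v, of_apply, LinearMap.id_apply, single_apply, vecMulVec_apply, Pi.star_apply]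
    split_ifs <;> simp_all
  rw [hchoi]
  exact posSemidef_vecMulVec_self_star v

lemma one_div_mem_retrCosts {N : MatC d →ₗ[ℂ] MatC d} {O : MatC d} {c : ℝ} (hc : 0 < c)
    (hN : ∀ ρ : MatC d, IsDensityMatrix ρ → (N ρ * O).trace = c * (ρ * O).trace) :
    1 / c ∈ retrCosts N O := by
  refine ⟨1 / c, 0, LinearMap.id, LinearMap.id, isQuantumChannel_id, isQuantumChannel_id,
    fun ρ hρ => ?_, by simp [abs_of_pos hc]⟩
  simp only [Complex.ofReal_zero, zero_smul, add_zero, LinearMap.smul_apply, LinearMap.id_apply,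
    Matrix.smul_mul, trace_smul, smul_eq_mul, hN ρ hρ, Complex.ofReal_div, Complex.ofReal_one]
  field_simp [Complex.ofReal_ne_zero.mpr hc.ne']

lemma one_div_le_of_mem_retrCosts {N : MatC d →ₗ[ℂ] MatC d} {O : MatC d} (hO : O.IsHermitian)
    (hO2 : O * O = 1) {ρ₁ ρ₂ : MatC d} (hρ₁ : IsDensityMatrix ρ₁) (hρ₂ : IsDensityMatrix ρ₂)
    (hρ₁O : (ρ₁ * O).trace = 1) (hρ₂O : (ρ₂ * O).trace = -1) {c : ℝ} (hc : 0 < c)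
    (hN : N ρ₁ - N ρ₂ = (c : ℂ) • (ρ₁ - ρ₂)) {s : ℝ} (hs : s ∈ retrCosts N O) : 1 / c ≤ s := by
  obtain ⟨c₁, c₂, D₁, D₂, h₁, h₂, hD, rfl⟩ := hs
  let gap : (MatC d →ₗ[ℂ] MatC d) → ℂ := fun D => (D ρ₁ * O).trace - (D ρ₂ * O).trace
  have hgap : ∀ D, IsQuantumChannel D → ‖gap D‖ ≤ 2 := fun D hD =>
    calc ‖gap D‖ ≤ 1 + 1 := (norm_sub_le _ _).trans <| add_le_add
          ((hD.isDensityMatrix_apply hρ₁).norm_trace_mul_le_one hO hO2)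
          ((hD.isDensityMatrix_apply hρ₂).norm_trace_mul_le_one hO hO2)
      _ = 2 := one_add_one_eq_two
  have hsplit : (2 : ℂ) = c * (c₁ * gap D₁ + c₂ * gap D₂) := by
    rw [show (2 : ℂ) = (ρ₁ * O).trace - (ρ₂ * O).trace by rw [hρ₁O, hρ₂O]; norm_num,
      ← hD ρ₁ hρ₁, ← hD ρ₂ hρ₂, ← trace_sub, ← sub_mul, ← map_sub, hN]
    simp only [gap, map_smul, map_sub, LinearMap.add_apply, LinearMap.smul_apply, Matrix.smul_mul,
      sub_mul, add_mul, trace_smul, trace_sub, trace_add, smul_eq_mul]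
    ring
  have hbound : 2 ≤ c * (|c₁| * 2 + |c₂| * 2) :=
    calc (2 : ℝ) = ‖(2 : ℂ)‖ := by simp
      _ = c * ‖c₁ * gap D₁ + c₂ * gap D₂‖ := by
          rw [hsplit, norm_mul, Complex.norm_real, Real.norm_of_nonneg hc.le]
      _ ≤ c * (|c₁| * 2 + |c₂| * 2) := by
          gcongr
          refine (norm_add_le _ _).trans (add_le_add ?_ ?_) <;>
            rw [norm_mul, Complex.norm_real, Real.norm_eq_abs] <;> gcongr
          exacts [hgap D₁ h₁, hgap D₂ h₂]
  rw [div_le_iff₀ hc]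
  linarith

lemma isDensityMatrix_smul_one_add [Nonempty d] {O : MatC d} (hO : O.IsHermitian)
    (hO2 : O * O = 1) (hOtr : O.trace = 0) :
    IsDensityMatrix ((Fintype.card d : ℂ)⁻¹ • (1 + O)) := by
  refine ⟨(posSemidef_one_add hO hO2).smul (by positivity), ?_⟩
  rw [trace_smul, trace_add, trace_one, hOtr, add_zero, smul_eq_mul]
  exact inv_mul_cancel₀ (Nat.cast_ne_zero.mpr Fintype.card_ne_zero)

lemma trace_smul_one_add_mul [Nonempty d] {O : MatC d} (hO2 : O * O = 1) (hOtr : O.trace = 0) :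
    ((Fintype.card d : ℂ)⁻¹ • (1 + O) * O).trace = 1 := by
  rw [Matrix.smul_mul, add_mul, one_mul, hO2, trace_smul, trace_add, trace_one, hOtr, zero_add,
    smul_eq_mul]
  exact inv_mul_cancel₀ (Nat.cast_ne_zero.mpr Fintype.card_ne_zero)

end Channels

section Depolarizing

variable {n : ℕ} {ε : ℝ}

lemma depol_sub_depol {ρ σ : MatC (Fin n → Fin 2)} (h : ρ.trace = σ.trace) :
    depol n ε ρ - depol n ε σ = ((1 - ε : ℝ) : ℂ) • (ρ - σ) := by
  simp only [depol, LinearMap.coe_mk, AddHom.coe_mk, h]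
  module

lemma trace_depol_mul {O : MatC (Fin n → Fin 2)} (hO : O.trace = 0) (ρ : MatC (Fin n → Fin 2)) :
    (depol n ε ρ * O).trace = ((1 - ε : ℝ) : ℂ) * (ρ * O).trace := by
  simp only [depol, LinearMap.coe_mk, AddHom.coe_mk, add_mul, Matrix.smul_mul, one_mul,
    trace_add, trace_smul, hO, smul_eq_mul, mul_zero, add_zero]

end Depolarizing

theorem stmt17_general (n : ℕ) (ε : ℝ) (hε1 : ε < 1)
    (t : Fin n → Fin 4) (hO : pauliN n t ≠ 1) :
    sInf (retrCosts (depol n ε) (pauliN n t)) = 1 / (1 - ε) := by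
  set O := pauliN n t
  have hOherm : O.IsHermitian := pauliN_isHermitian t
  have hO2 : O * O = 1 := pauliN_mul_self t
  have hOtr : O.trace = 0 := trace_pauliN_eq_zero hO
  have hnegO2 : -O * -O = 1 := by rw [neg_mul_neg, hO2]
  have hnegOtr : (-O).trace = 0 := by rw [trace_neg, hOtr, neg_zero]
  have hρ₁ := isDensityMatrix_smul_one_add hOherm hO2 hOtr
  have hρ₂ := isDensityMatrix_smul_one_add hOherm.neg hnegO2 hnegOtr
  have hρ₂O := trace_smul_one_add_mul hnegO2 hnegOtr
  rw [mul_neg, trace_neg, neg_eq_iff_eq_neg] at hρ₂O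
  have hc : 0 < 1 - ε := sub_pos.mpr hε1
  refine IsLeast.csInf_eq ⟨one_div_mem_retrCosts hc fun ρ _ => trace_depol_mul hOtr ρ,
    fun s hs => one_div_le_of_mem_retrCosts hOherm hO2 hρ₁ hρ₂ (trace_smul_one_add_mul hO2 hOtr)
      hρ₂O hc (depol_sub_depol (hρ₁.2.trans hρ₂.2.symm)) hs⟩

/-- The retrieving cost of any non-identity `n`-qubit Pauli observable through the
`n`-qubit depolarizing channel with noise level `ε` is `1/(1−ε)`. -/
theorem stmt17 (n : ℕ) (hn : 1 ≤ n) (ε : ℝ) (hε0 : 0 ≤ ε) (hε1 : ε < 1)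
    (t : Fin n → Fin 4) (hO : pauliN n t ≠ 1) :
    sInf (retrCosts (depol n ε) (pauliN n t)) = 1 / (1 - ε) :=
  stmt17_general n ε hε1 t hO
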